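/- arXiv:2512.24242 — 5 statements merged into one kernel-verified Lean document; each statement's English description precedes it below -/
import Mathlib

section
/- Let A, B, C be finite subsets of an (n−1)-element set V with |A|+|B|+|C| < 2(n−1) and define g(A,B,C) = C(|A|,2)+C(|B|,2)+C(|C|,2)+C(|A∩B∩C|,2)−C(|A∩B|,2)−C(|B∩C|,2)−C(|C∩A|,2). Then there exist subsets A', B', C' of V with |A'|=|A|, |B'|=|B|, |C'|=|C|, A'∩B'∩C' = ∅, and g(A,B,C) ≤ g(A',B',C'). -/
open Finset

/-- The quantity `g(A,B,C)` from the inclusion-exclusion bound. -/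
def gQuant {V : Type*} [DecidableEq V] (A B C : Finset V) : ℤ :=
  (A.card.choose 2 : ℤ) + (B.card.choose 2 : ℤ) + (C.card.choose 2 : ℤ) +
    ((A ∩ B ∩ C).card.choose 2 : ℤ) - ((A ∩ B).card.choose 2 : ℤ) -
    ((B ∩ C).card.choose 2 : ℤ) - ((C ∩ A).card.choose 2 : ℤ)

lemma choose_two_pred (m : ℕ) (hm : 1 ≤ m) :
    (m.choose 2 : ℤ) = ((m - 1).choose 2 : ℤ) + ((m : ℤ) - 1) := by
  obtain ⟨k, rfl⟩ := Nat.exists_eq_add_of_le hm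
  simp only [Nat.add_comm 1 k, Nat.add_sub_cancel, Nat.choose_succ_succ,
    Nat.choose_one_right]
  push_cast
  ring

lemma gQuant_swap {V : Type*} [DecidableEq V] (A B C : Finset V) :
    gQuant A B C = gQuant B A C := by
  unfold gQuant
  rw [inter_comm B A, inter_comm A C, inter_comm B C, inter_comm C A]
  ring

/-- The key exchange step: replace `v ∈ A ∩ B ∩ C` by `u` in `B`,
where `u ∉ B` and `u` is not in both `A` and `C`. -/
lemma step_g {V : Type*} [DecidableEq V] (A B C : Finset V) (u v : V)
    (hv : v ∈ A ∩ B ∩ C) (huB : u ∉ B) (huAC : ¬(u ∈ A ∧ u ∈ C)) :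
    (insert u (B.erase v)).card = B.card ∧
    A ∩ insert u (B.erase v) ∩ C = (A ∩ B ∩ C).erase v ∧
    gQuant A B C ≤ gQuant A (insert u (B.erase v)) C := by
  simp only [mem_inter] at hv
  obtain ⟨⟨hvA, hvB⟩, hvC⟩ := hv
  have huv : u ≠ v := by rintro rfl; exact huB hvB
  set B' := insert u (B.erase v) with hB'
  have hBpos : 1 ≤ B.card := card_pos.mpr ⟨v, hvB⟩
  have hcardB : B'.card = B.card := by
    rw [hB', card_insert_of_notMem (by simp [huv, huB]), card_erase_of_mem hvB]
    omega
  have htrip : A ∩ B' ∩ C = (A ∩ B ∩ C).erase v := by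
    ext x
    simp only [hB', mem_inter, mem_insert, mem_erase]
    constructor
    · rintro ⟨⟨hxA, (rfl | ⟨hxv, hxB⟩)⟩, hxC⟩
      · exact absurd ⟨hxA, hxC⟩ huAC
      · exact ⟨hxv, ⟨hxA, hxB⟩, hxC⟩
    · rintro ⟨hxv, ⟨hxA, hxB⟩, hxC⟩
      exact ⟨⟨hxA, Or.inr ⟨hxv, hxB⟩⟩, hxC⟩
  refine ⟨hcardB, htrip, ?_⟩
  -- abbreviations
  have hvAB : v ∈ A ∩ B := mem_inter.mpr ⟨hvA, hvB⟩
  have hvBC : v ∈ B ∩ C := mem_inter.mpr ⟨hvB, hvC⟩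
  have hvABC : v ∈ A ∩ B ∩ C := by simp [hvA, hvB, hvC]
  have ht1 : 1 ≤ (A ∩ B ∩ C).card := card_pos.mpr ⟨v, hvABC⟩
  have htAB : (A ∩ B ∩ C).card ≤ (A ∩ B).card := card_le_card inter_subset_left
  have htBC : (A ∩ B ∩ C).card ≤ (B ∩ C).card := by
    apply card_le_card; intro x; simp only [mem_inter]; tauto
  have hab1 : 1 ≤ (A ∩ B).card := le_trans ht1 htAB
  have hbc1 : 1 ≤ (B ∩ C).card := le_trans ht1 htBC
  have hCA : C ∩ A = C ∩ A := rfl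
  have htripcard : (A ∩ B' ∩ C).card = (A ∩ B ∩ C).card - 1 := by
    rw [htrip, card_erase_of_mem hvABC]
  -- card of A ∩ B'
  have hAB' : (A ∩ B').card = if u ∈ A then (A ∩ B).card else (A ∩ B).card - 1 := by
    by_cases hu : u ∈ A
    · have h1 : A ∩ B' = insert u ((A ∩ B).erase v) := by
        ext x
        simp only [hB', mem_inter, mem_insert, mem_erase]
        constructor
        · rintro ⟨hxA, (rfl | ⟨hxv, hxB⟩)⟩
          · exact Or.inl rfl
          · exact Or.inr ⟨hxv, hxA, hxB⟩
        · rintro (rfl | ⟨hxv, hxA, hxB⟩)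
          · exact ⟨hu, Or.inl rfl⟩
          · exact ⟨hxA, Or.inr ⟨hxv, hxB⟩⟩
      rw [h1, card_insert_of_notMem (by simp [huB]), card_erase_of_mem hvAB]
      simp [hu]
      omega
    · have h1 : A ∩ B' = (A ∩ B).erase v := by
        ext x
        simp only [hB', mem_inter, mem_insert, mem_erase]
        constructor
        · rintro ⟨hxA, (rfl | ⟨hxv, hxB⟩)⟩
          · exact absurd hxA hu
          · exact ⟨hxv, hxA, hxB⟩
        · rintro ⟨hxv, hxA, hxB⟩
          exact ⟨hxA, Or.inr ⟨hxv, hxB⟩⟩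
      rw [h1, card_erase_of_mem hvAB]
      simp [hu]
  have hB'C : (B' ∩ C).card = if u ∈ C then (B ∩ C).card else (B ∩ C).card - 1 := by
    by_cases hu : u ∈ C
    · have h1 : B' ∩ C = insert u ((B ∩ C).erase v) := by
        ext x
        simp only [hB', mem_inter, mem_insert, mem_erase]
        constructor
        · rintro ⟨(rfl | ⟨hxv, hxB⟩), hxC⟩
          · exact Or.inl rfl
          · exact Or.inr ⟨hxv, hxB, hxC⟩
        · rintro (rfl | ⟨hxv, hxB, hxC⟩)
          · exact ⟨Or.inl rfl, hu⟩
          · exact ⟨Or.inr ⟨hxv, hxB⟩, hxC⟩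
      rw [h1, card_insert_of_notMem (by simp [huB]), card_erase_of_mem hvBC]
      simp [hu]
      omega
    · have h1 : B' ∩ C = (B ∩ C).erase v := by
        ext x
        simp only [hB', mem_inter, mem_insert, mem_erase]
        constructor
        · rintro ⟨(rfl | ⟨hxv, hxB⟩), hxC⟩
          · exact absurd hxC hu
          · exact ⟨hxv, hxB, hxC⟩
        · rintro ⟨hxv, hxB, hxC⟩
          exact ⟨Or.inr ⟨hxv, hxB⟩, hxC⟩
      rw [h1, card_erase_of_mem hvBC]
      simp [hu]
  have hC'A : C ∩ B' = C ∩ B' := rfl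
  have hCA' : (C ∩ A).card = (C ∩ A).card := rfl
  -- the choose identities
  have et := choose_two_pred (A ∩ B ∩ C).card ht1
  have eab := choose_two_pred (A ∩ B).card hab1
  have ebc := choose_two_pred (B ∩ C).card hbc1
  unfold gQuant
  rw [hcardB, htripcard]
  by_cases huA : u ∈ A
  · have huC : u ∉ C := fun h => huAC ⟨huA, h⟩
    rw [hAB', hB'C]
    simp only [huA, huC, if_true, if_false]
    have : ((A ∩ B ∩ C).card : ℤ) ≤ ((B ∩ C).card : ℤ) := by exact_mod_cast htBC
    linarith [et, ebc]
  · by_cases huC : u ∈ C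
    · rw [hAB', hB'C]
      simp only [huA, huC, if_true, if_false]
      have : ((A ∩ B ∩ C).card : ℤ) ≤ ((A ∩ B).card : ℤ) := by exact_mod_cast htAB
      linarith [et, eab]
    · rw [hAB', hB'C]
      simp only [huA, huC, if_false]
      have h1 : ((A ∩ B ∩ C).card : ℤ) ≤ ((A ∩ B).card : ℤ) := by exact_mod_cast htAB
      have h2 : ((A ∩ B ∩ C).card : ℤ) ≤ ((B ∩ C).card : ℤ) := by exact_mod_cast htBC
      linarith [et, eab, ebc]

lemma exists_light {V : Type*} [Fintype V] [DecidableEq V] (m : ℕ)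
    (hV : Fintype.card V = m) (A B C : Finset V)
    (hcard : A.card + B.card + C.card < 2 * m) :
    ∃ u : V, ¬(u ∈ A ∧ u ∈ B) ∧ ¬(u ∈ B ∧ u ∈ C) ∧ ¬(u ∈ A ∧ u ∈ C) := by
  by_contra h
  push_neg at h
  have hall : ∀ u : V, 2 ≤ (if u ∈ A then 1 else 0) + (if u ∈ B then 1 else 0)
      + (if u ∈ C then 1 else 0) := by
    intro u
    have := h u
    by_cases hA : u ∈ A <;> by_cases hB : u ∈ B <;> by_cases hC : u ∈ C <;>
      simp_all
  have hsum : ∀ (S : Finset V), S.card = ∑ u : V, if u ∈ S then 1 else 0 := by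
    intro S
    rw [Finset.sum_ite_mem, univ_inter, Finset.sum_const, smul_eq_mul, mul_one]
  have : 2 * m ≤ A.card + B.card + C.card := by
    calc 2 * m = ∑ _u : V, 2 := by
          rw [Finset.sum_const, card_univ, hV, smul_eq_mul, mul_comm]
      _ ≤ ∑ u : V, ((if u ∈ A then 1 else 0) + (if u ∈ B then 1 else 0)
            + (if u ∈ C then 1 else 0)) := Finset.sum_le_sum (fun u _ => hall u)
      _ = A.card + B.card + C.card := by
          rw [Finset.sum_add_distrib, Finset.sum_add_distrib, hsum A, hsum B, hsum C]
  omega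

lemma main_aux {V : Type*} [Fintype V] [DecidableEq V] (m : ℕ)
    (hV : Fintype.card V = m) :
    ∀ k, ∀ A B C : Finset V, (A ∩ B ∩ C).card = k →
      A.card + B.card + C.card < 2 * m →
      ∃ A' B' C' : Finset V, A'.card = A.card ∧ B'.card = B.card ∧ C'.card = C.card ∧
        A' ∩ B' ∩ C' = ∅ ∧ gQuant A B C ≤ gQuant A' B' C' := by
  intro k
  induction k with
  | zero =>
    intro A B C hk _
    exact ⟨A, B, C, rfl, rfl, rfl, card_eq_zero.mp hk, le_refl _⟩
  | succ k ih =>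
    intro A B C hk hsum
    have hne : (A ∩ B ∩ C).Nonempty := by
      rw [← card_pos, hk]; omega
    obtain ⟨v, hv⟩ := hne
    obtain ⟨u, hAB, hBC, hAC⟩ := exists_light m hV A B C hsum
    simp only [mem_inter] at hv
    obtain ⟨⟨hvA, hvB⟩, hvC⟩ := hv
    by_cases huB : u ∈ B
    · -- then u ∉ A and u ∉ C ; modify A
      have huA : u ∉ A := fun h => hAB ⟨h, huB⟩
      have huC : u ∉ C := fun h => hBC ⟨huB, h⟩
      obtain ⟨hc, ht, hg⟩ := step_g B A C u v (by simp [hvA, hvB, hvC]) huA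
        (fun h => hBC h)
      set A₂ := insert u (A.erase v) with hA₂
      have htrip : (A₂ ∩ B ∩ C).card = k := by
        have : A₂ ∩ B ∩ C = B ∩ A₂ ∩ C := by rw [inter_comm A₂ B]
        rw [this, ht, card_erase_of_mem (by simp [hvA, hvB, hvC])]
        have : (B ∩ A ∩ C).card = (A ∩ B ∩ C).card := by rw [inter_comm B A]
        omega
      obtain ⟨A', B', C', h1, h2, h3, h4, h5⟩ := ih A₂ B C htrip (by omega)
      refine ⟨A', B', C', by rw [h1, hc], h2, h3, h4, ?_⟩
      calc gQuant A B C = gQuant B A C := gQuant_swap A B C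
        _ ≤ gQuant B A₂ C := hg
        _ = gQuant A₂ B C := (gQuant_swap A₂ B C).symm
        _ ≤ gQuant A' B' C' := h5
    · -- modify B
      obtain ⟨hc, ht, hg⟩ := step_g A B C u v (by simp [hvA, hvB, hvC]) huB
        (fun h => hAC h)
      set B₂ := insert u (B.erase v) with hB₂
      have htrip : (A ∩ B₂ ∩ C).card = k := by
        rw [ht, card_erase_of_mem (by simp [hvA, hvB, hvC])]
        omega
      obtain ⟨A', B', C', h1, h2, h3, h4, h5⟩ := ih A B₂ C htrip (by omega)
      exact ⟨A', B', C', h1, by rw [h2, hc], h3, h4, le_trans hg h5⟩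

theorem stmt_9 {V : Type*} [Fintype V] [DecidableEq V] (n : ℕ)
    (hV : Fintype.card V = n - 1) (A B C : Finset V)
    (hcard : A.card + B.card + C.card < 2 * (n - 1)) :
    ∃ A' B' C' : Finset V, A'.card = A.card ∧ B'.card = B.card ∧ C'.card = C.card ∧
      A' ∩ B' ∩ C' = ∅ ∧ gQuant A B C ≤ gQuant A' B' C' := by
  exact main_aux (n - 1) hV (A ∩ B ∩ C).card A B C rfl hcard
end

section
/- For every surface S of genus g ≥ 0, and for every partition of an n-set into X and Y with |X| > 2|Y| − 4 + 4g, the 3-uniform hypergraph G with all edges of types XXX, XYY, and YYY contains no vertex-spanning subcomplex homeomorphic to S. Consequently, choosing |X| = ⌈2n/3⌉ + 4g yields δ₁(G) ≥ (5/9)·C(n,2) − o(n²). -/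
open Finset

/-- Tight connectivity between edges within an edge set `E` of a 3-graph. -/
def TightConnIn {V : Type*} [DecidableEq V] (E : Finset (Finset V)) (e f : Finset V) : Prop :=
  Relation.ReflTransGen (fun a b => a ∈ E ∧ b ∈ E ∧ (a ∩ b).card = 2) e f

/-- The 3-graph on `X ∪ Y` with all edges of types XXX, XYY and YYY. -/
def surfEdges {V : Type*} [Fintype V] [DecidableEq V] (X Y : Finset V) :
    Finset (Finset V) :=
  (Finset.univ.powersetCard 3).filter (fun e =>
    e ⊆ X ∨ ((e ∩ X).card = 1 ∧ (e ∩ Y).card = 2) ∨ e ⊆ Y)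

/-- An abstract (combinatorial) triangulation of a closed surface of genus `g`:
a tightly connected family of triangles in which every covered vertex lies in at
least 3 triangles, every 2-edge lies in exactly two triangles (`2e = 3f`), and
Euler's formula `f + v - e = 2 - 2g` holds. -/
def IsSurfaceTriangulation {V : Type*} [DecidableEq V] (g : ℕ)
    (H : Finset (Finset V)) : Prop :=
  (∀ t ∈ H, t.card = 3) ∧
  (∀ e ∈ H, ∀ f ∈ H, TightConnIn H e f) ∧
  (∀ x : V, (∃ t ∈ H, x ∈ t) → 3 ≤ (H.filter (fun t => x ∈ t)).card) ∧
  2 * (H.biUnion (fun t => t.powersetCard 2)).card = 3 * H.card ∧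
  (H.card : ℤ) + ((H.biUnion id).card : ℤ)
      - ((H.biUnion (fun t => t.powersetCard 2)).card : ℤ) = 2 - 2 * (g : ℤ)

/-!
Relative to the partition, an edge of `surfEdges X Y` is a triple meeting `X` in 0, 1 or 3
vertices, never 2. Hence a triple sharing two vertices with an XXX-triple is again an XXX-triple,
so a tightly connected spanning surface `H` (which must contain a triple through a vertex of `Y`)
has at most one vertex of `X` in each facet. Counting facets through the vertices of `X` gives
`f ≥ 3|X|`, while Euler's formula with `2e = 3f` gives `f = 2v - 4 + 4g = 2|X| + 2|Y| - 4 + 4g`;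
together they force `|X| ≤ 2|Y| - 4 + 4g`.

For the degree bound with `|X| ≈ 2n/3`: a vertex of `X` lies in all triples `vxx'` and `vyy'`,
about `(4/9 + 1/9) n²/2` of them, and a vertex of `Y` in all triples except those `vxx'`,
about `(1 - 4/9) n²/2`; the `4g` shift and the rounding only cost `O((g + 1) n)`.
-/

lemma Finset.subset_iff_card_inter_eq {α : Type*} [DecidableEq α] {s t : Finset α} :
    s ⊆ t ↔ #(s ∩ t) = #s :=
  ⟨fun h => by rw [inter_eq_left.2 h],
    fun h => inter_eq_left.1 (eq_of_subset_of_card_le inter_subset_left h.ge)⟩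

lemma Finset.mul_card_le_card_of_card_inter_le_one {α : Type*} [DecidableEq α] {s : Finset α}
    {B : Finset (Finset α)} {n : ℕ} (hB : ∀ t ∈ B, #(s ∩ t) ≤ 1)
    (hdeg : ∀ a ∈ s, n ≤ #{b ∈ B | a ∈ b}) : #s * n ≤ #B :=
  calc #s * n ≤ ∑ t ∈ B, #(s ∩ t) := le_sum_card_inter hdeg
    _ ≤ ∑ _t ∈ B, 1 := sum_le_sum hB
    _ = #B := (card_eq_sum_ones B).symm

lemma Finset.card_le_card_filter_mem_of_insert_mem {α : Type*} [DecidableEq α]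
    {E S : Finset (Finset α)} {v : α} (hv : ∀ p ∈ S, v ∉ p) (hS : ∀ p ∈ S, insert v p ∈ E) :
    #S ≤ #{e ∈ E | v ∈ e} :=
  card_le_card_of_injOn (insert v) (fun p hp => mem_filter.2 ⟨hS p hp, mem_insert_self v p⟩)
    fun p hp q hq hpq => by rw [← erase_insert (hv p hp), hpq, erase_insert (hv q hq)]

lemma IsSurfaceTriangulation.card_eq {V : Type*} [DecidableEq V] {g : ℕ} {H : Finset (Finset V)}
    (hT : IsSurfaceTriangulation g H) : (#H : ℤ) = 2 * #(H.biUnion id) - 4 + 4 * g := by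
  obtain ⟨-, -, -, hedges, heuler⟩ := hT
  omega

section SurfEdges

variable {V : Type*} [Fintype V] [DecidableEq V] {X Y : Finset V} {H : Finset (Finset V)} {v : V}

lemma card_inter_add_card_inter_of_partition (hdisj : Disjoint X Y) (hunion : X ∪ Y = univ)
    (e : Finset V) : #(e ∩ X) + #(e ∩ Y) = #e := by
  rw [← card_union_of_disjoint (hdisj.mono inter_subset_right inter_subset_right),
    ← inter_union_distrib_left, hunion, inter_univ]

lemma mem_surfEdges_iff (hdisj : Disjoint X Y) (hunion : X ∪ Y = univ) {e : Finset V} :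
    e ∈ surfEdges X Y ↔ #e = 3 ∧ #(e ∩ X) ≠ 2 := by
  have hsum := card_inter_add_card_inter_of_partition hdisj hunion e
  simp only [surfEdges, mem_filter, mem_powersetCard, subset_univ, true_and]
  rw [subset_iff_card_inter_eq, subset_iff_card_inter_eq]
  omega

lemma subset_of_tightConnIn (hdisj : Disjoint X Y) (hunion : X ∪ Y = univ)
    (hH : H ⊆ surfEdges X Y) {a b : Finset V} (hab : TightConnIn H a b) (ha : a ⊆ X) : b ⊆ X := by
  induction hab with
  | refl => exact ha
  | @tail b c _ hbc hb =>
    obtain ⟨-, hc, hbc⟩ := hbc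
    obtain ⟨hc3, hcX⟩ := (mem_surfEdges_iff hdisj hunion).1 (hH hc)
    have h2 : 2 ≤ #(c ∩ X) :=
      hbc ▸ card_le_card fun z hz => mem_inter.2 ⟨(mem_inter.1 hz).2, hb (mem_inter.1 hz).1⟩
    have := card_le_card (inter_subset_left : c ∩ X ⊆ c)
    rw [subset_iff_card_inter_eq]
    omega

lemma card_inter_le_one_of_tightConnIn (hdisj : Disjoint X Y) (hunion : X ∪ Y = univ)
    (hH : H ⊆ surfEdges X Y) (hconn : ∀ e ∈ H, ∀ f ∈ H, TightConnIn H e f) {t₀ : Finset V}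
    (ht₀ : t₀ ∈ H) (ht₀X : ¬ t₀ ⊆ X) {t : Finset V} (ht : t ∈ H) : #(X ∩ t) ≤ 1 := by
  obtain ⟨ht3, htX⟩ := (mem_surfEdges_iff hdisj hunion).1 (hH ht)
  have htX' : ¬ t ⊆ X := fun h => ht₀X (subset_of_tightConnIn hdisj hunion hH (hconn t ht t₀ ht₀) h)
  have := card_le_card (inter_subset_left : t ∩ X ⊆ t)
  rw [subset_iff_card_inter_eq] at htX'
  rw [inter_comm]
  omega

theorem not_spanning_of_card_lt {g : ℕ} (hdisj : Disjoint X Y) (hunion : X ∪ Y = univ)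
    (hY : Y.Nonempty) (hcard : 2 * (#Y : ℤ) - 4 + 4 * g < #X) (hH : H ⊆ surfEdges X Y)
    (hT : IsSurfaceTriangulation g H) : ¬ ∀ v : V, ∃ t ∈ H, v ∈ t := by
  intro hspan
  have hEuler := hT.card_eq
  obtain ⟨-, hconn, hdeg, -, -⟩ := hT
  obtain ⟨y, hy⟩ := hY
  obtain ⟨t₀, ht₀, hyt₀⟩ := hspan y
  have ht₀X : ¬ t₀ ⊆ X := fun h => disjoint_left.1 hdisj (h hyt₀) hy
  have hfacets : #X * 3 ≤ #H := mul_card_le_card_of_card_inter_le_one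
    (fun t ht => card_inter_le_one_of_tightConnIn hdisj hunion hH hconn ht₀ ht₀X ht)
    (fun x _ => hdeg x (hspan x))
  have hvertices : H.biUnion id = univ := eq_univ_of_forall fun v => by
    obtain ⟨t, ht, hv⟩ := hspan v
    exact mem_biUnion.2 ⟨t, ht, hv⟩
  rw [hvertices, ← hunion, card_union_of_disjoint hdisj] at hEuler
  omega

lemma choose_two_add_choose_two_le_degree_of_mem_left (hdisj : Disjoint X Y)
    (hunion : X ∪ Y = univ) (hv : v ∈ X) :
    (#X - 1).choose 2 + (#Y).choose 2 ≤ #{e ∈ surfEdges X Y | v ∈ e} := by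
  have hvY : v ∉ Y := disjoint_left.1 hdisj hv
  have hpairs : Disjoint ((X.erase v).powersetCard 2) (Y.powersetCard 2) := by
    refine disjoint_left.2 fun p hpX hpY => ?_
    rw [mem_powersetCard] at hpX hpY
    obtain ⟨z, hz⟩ := card_pos.1 (hpX.2.symm ▸ two_pos : 0 < #p)
    exact disjoint_left.1 hdisj (erase_subset v X (hpX.1 hz)) (hpY.1 hz)
  calc (#X - 1).choose 2 + (#Y).choose 2
      = #((X.erase v).powersetCard 2 ∪ Y.powersetCard 2) := by
        rw [card_union_of_disjoint hpairs, card_powersetCard, card_powersetCard,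
          card_erase_of_mem hv]
    _ ≤ _ := by
      refine card_le_card_filter_mem_of_insert_mem (fun p hp hvp => ?_) fun p hp => ?_
      · rcases mem_union.1 hp with hp | hp
        · exact notMem_erase v X ((mem_powersetCard.1 hp).1 hvp)
        · exact hvY ((mem_powersetCard.1 hp).1 hvp)
      rw [mem_surfEdges_iff hdisj hunion]
      rcases mem_union.1 hp with hp | hp <;> rw [mem_powersetCard] at hp
      · have hvp : v ∉ p := fun h => notMem_erase v X (hp.1 h)
        have hpX : insert v p ⊆ X := insert_subset hv (hp.1.trans (erase_subset v X))
        rw [inter_eq_left.2 hpX, card_insert_of_notMem hvp, hp.2]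
        omega
      · have hvp : v ∉ p := fun h => hvY (hp.1 h)
        rw [insert_inter_of_mem hv, disjoint_iff_inter_eq_empty.1 (hdisj.symm.mono_left hp.1),
          card_insert_of_notMem hvp, hp.2]
        simp

lemma choose_two_le_choose_two_add_degree_of_mem_right (hdisj : Disjoint X Y)
    (hunion : X ∪ Y = univ) (hv : v ∈ Y) :
    (Fintype.card V - 1).choose 2 ≤ (#X).choose 2 + #{e ∈ surfEdges X Y | v ∈ e} := by
  have hvX : v ∉ X := disjoint_right.1 hdisj hv
  set P := (univ.erase v).powersetCard 2
  have hinX : #{p ∈ P | p ⊆ X} ≤ (#X).choose 2 := by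
    rw [← card_powersetCard]
    exact card_le_card fun p hp => by
      rw [mem_filter, mem_powersetCard] at hp
      exact mem_powersetCard.2 ⟨hp.2, hp.1.2⟩
  have hnotinX : #{p ∈ P | ¬ p ⊆ X} ≤ #{e ∈ surfEdges X Y | v ∈ e} := by
    refine card_le_card_filter_mem_of_insert_mem (fun p hp hvp => ?_) fun p hp => ?_
    · rw [mem_filter, mem_powersetCard] at hp
      exact notMem_erase v univ (hp.1.1 hvp)
    rw [mem_filter, mem_powersetCard] at hp
    have hvp : v ∉ p := fun h => notMem_erase v univ (hp.1.1 h)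
    have hpX : #(p ∩ X) ≠ #p := mt subset_iff_card_inter_eq.2 hp.2
    have := card_le_card (inter_subset_left : p ∩ X ⊆ p)
    rw [mem_surfEdges_iff hdisj hunion, insert_inter_of_notMem hvX, card_insert_of_notMem hvp]
    omega
  have hP : #P = (Fintype.card V - 1).choose 2 := by
    rw [card_powersetCard, card_erase_of_mem (mem_univ v), card_univ]
  have := card_filter_add_card_filter_not (s := P) (p := fun p => p ⊆ X)
  omega

end SurfEdges

section Asymptotics

variable {N A g ε : ℝ}

lemma five_ninths_le_choose_two_add_choose_two (hg : 0 ≤ g) (hN : 0 < N)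
    (hA : 2 * N / 3 + 4 * g ≤ A) (hε : 30 + 30 * g ≤ ε * N) :
    5 / 9 * (N * (N - 1) / 2) - ε * N ^ 2 ≤ (A - 1) * (A - 2) / 2 + (N - A) * (N - A - 1) / 2 := by
  nlinarith [mul_le_mul_of_nonneg_right hε hN.le, mul_nonneg (sub_nonneg.2 hA) hN.le,
    mul_nonneg hg hN.le, sq_nonneg (A - 2 * N / 3 - 1 / 2)]

lemma five_ninths_le_choose_two_sub_choose_two (hg : 0 ≤ g) (hN : 12 * g + 12 ≤ N)
    (hA : 2 * N / 3 + 4 * g ≤ A) (hA' : A < 2 * N / 3 + 1 + 4 * g) (hε : 30 + 30 * g ≤ ε * N) :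
    5 / 9 * (N * (N - 1) / 2) - ε * N ^ 2 ≤ (N - 1) * (N - 2) / 2 - A * (A - 1) / 2 := by
  have hA2 : A * (A - 1) ≤ (2 * N / 3 + 1 + 4 * g) * (2 * N / 3 + 4 * g) := by
    nlinarith [mul_nonneg (by linarith : (0 : ℝ) ≤ 2 * N / 3 + 1 + 4 * g - A)
      (by linarith : (0 : ℝ) ≤ A - 1)]
  nlinarith [mul_le_mul_of_nonneg_right hε (by linarith : (0 : ℝ) ≤ N),
    mul_le_mul_of_nonneg_left (by linarith : g ≤ N) hg, mul_nonneg hg (by linarith : (0 : ℝ) ≤ N)]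

end Asymptotics

lemma two_thirds_add_le_and_lt_of_eq_ceil {n g a : ℕ} (ha : a = ⌈(2 * (n : ℝ)) / 3⌉₊ + 4 * g) :
    2 * (n : ℝ) / 3 + 4 * g ≤ a ∧ (a : ℝ) < 2 * n / 3 + 1 + 4 * g := by
  have h0 : (0 : ℝ) ≤ 2 * n / 3 := by positivity
  have hle := Nat.le_ceil (2 * (n : ℝ) / 3)
  have hlt := Nat.ceil_lt_add_one h0
  subst ha
  push_cast
  constructor <;> linarith

theorem five_ninths_le_degree_surfEdges (g : ℕ) {ε : ℝ} (hε : 0 < ε) :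
    ∃ n₀ : ℕ, ∀ n ≥ n₀, ∀ X Y : Finset (Fin n), Disjoint X Y → X ∪ Y = univ →
      #X = ⌈2 * (n : ℝ) / 3⌉₊ + 4 * g →
      ∀ v, 5 / 9 * (n.choose 2 : ℝ) - ε * n ^ 2 ≤ #{e ∈ surfEdges X Y | v ∈ e} := by
  obtain ⟨m, hm⟩ := exists_nat_ge ((30 + 30 * g) / ε)
  refine ⟨m + 12 * g + 12, fun n hn X Y hdisj hunion hX v => ?_⟩
  have hN : 12 * (g : ℝ) + 12 ≤ n := by exact_mod_cast (by omega : 12 * g + 12 ≤ n)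
  have hεN : 30 + 30 * (g : ℝ) ≤ ε * n := by
    rw [div_le_iff₀ hε] at hm
    nlinarith [(Nat.cast_le (α := ℝ)).2 (by omega : m ≤ n)]
  have hXY : (#X : ℝ) + #Y = n := by
    rw [← Nat.cast_add, ← card_union_of_disjoint hdisj, hunion, card_univ, Fintype.card_fin]
  obtain ⟨hXlo, hXhi⟩ := two_thirds_add_le_and_lt_of_eq_ceil hX
  rw [Nat.cast_choose_two]
  rcases mem_union.1 (hunion ▸ mem_univ v : v ∈ X ∪ Y) with hv | hv
  · have hdeg := (Nat.cast_le (α := ℝ)).2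
      (choose_two_add_choose_two_le_degree_of_mem_left hdisj hunion hv)
    push_cast [Nat.cast_choose_two, Nat.cast_pred (card_pos.2 ⟨v, hv⟩)] at hdeg
    have := five_ninths_le_choose_two_add_choose_two g.cast_nonneg (by linarith) hXlo hεN
    rw [show (#Y : ℝ) = n - #X by linarith] at hdeg
    linarith
  · have hdeg := (Nat.cast_le (α := ℝ)).2
      (choose_two_le_choose_two_add_degree_of_mem_right hdisj hunion hv)
    push_cast [Nat.cast_choose_two, Fintype.card_fin, Nat.cast_pred (by omega : 0 < n)] at hdeg
    have := five_ninths_le_choose_two_sub_choose_two g.cast_nonneg hN hXlo hXhi hεN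
    linarith

theorem stmt_14 (g : ℕ) :
    (∀ (V : Type) [Fintype V] [DecidableEq V] (X Y : Finset V),
      Disjoint X Y → X ∪ Y = Finset.univ → X.Nonempty → Y.Nonempty →
      2 * (Y.card : ℤ) - 4 + 4 * (g : ℤ) < (X.card : ℤ) →
      ∀ H ⊆ surfEdges X Y, IsSurfaceTriangulation g H →
        ¬ (∀ v : V, ∃ t ∈ H, v ∈ t)) ∧
    (∀ ε : ℝ, 0 < ε → ∃ n₀ : ℕ, ∀ n ≥ n₀, ∀ X Y : Finset (Fin n),
      Disjoint X Y → X ∪ Y = Finset.univ →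
      X.card = ⌈(2 * (n : ℝ)) / 3⌉₊ + 4 * g →
      ∀ v : Fin n,
        (5 / 9) * (n.choose 2 : ℝ) - ε * (n : ℝ)^2 ≤
          (((surfEdges X Y).filter (fun e => v ∈ e)).card : ℝ)) :=
  ⟨fun _ _ _ _ _ hdisj hunion _ hY hcard _ hH hT =>
    not_spanning_of_card_lt hdisj hunion hY hcard hH hT,
   fun _ hε => five_ninths_le_degree_surfEdges g hε⟩
end

section
/- Suppose x and y are vertices of a 3-graph G, u and v are vertices with {u,v,x} and {u,v,y} both edges of G, the tight components containing edges at x and y through their largest link components are distinct, and y is not in the tight component C*_x (the component containing all edges {x,a,b} with ab in the largest component C_x of L(x)). If u is a vertex of C_x, then {u,v,x} and {u,v,y} lie in C*_x, contradicting y ∉ V(C*_x). Hence u ∉ V(C_x); and symmetrically u ∉ V(C_y), so u lies in neither largest link component. -/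
open Finset

/-- Adjacency in the link graph of `x`. -/
def LinkAdj {V : Type*} [DecidableEq V] (E : Finset (Finset V)) (x a b : V) : Prop :=
  a ≠ b ∧ ({x, a, b} : Finset V) ∈ E

/-- Reachability in the link graph of `x`. -/
def LinkReach {V : Type*} [DecidableEq V] (E : Finset (Finset V)) (x : V) (a b : V) : Prop :=
  Relation.ReflTransGen (LinkAdj E x) a b

/-- Membership of an edge `f` in the tight component `C*ₓ` of `G` containing all
edges `{x,a,b}` with `ab` an edge of the link component `C_x` of `a₀`. -/
def InCStar {V : Type*} [DecidableEq V] (E : Finset (Finset V)) (x a₀ : V)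
    (f : Finset V) : Prop :=
  f ∈ E ∧ ∃ a b : V, LinkAdj E x a b ∧ LinkReach E x a₀ a ∧
    TightConnIn E ({x, a, b} : Finset V) f

private lemma three_distinct {V : Type*} [DecidableEq V] {a b c : V}
    (h : ({a, b, c} : Finset V).card = 3) : a ≠ b ∧ a ≠ c ∧ b ≠ c := by
  refine ⟨?_, ?_, ?_⟩ <;> rintro rfl
  · have h2 : ({a, a, c} : Finset V) = insert a {c} := by ext z; simp; try tauto
    rw [h2] at h
    have := Finset.card_insert_le a ({c} : Finset V)
    simp only [Finset.card_singleton] at this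
    omega
  · have h2 : ({a, b, a} : Finset V) = insert a {b} := by ext z; simp; try tauto
    rw [h2] at h
    have := Finset.card_insert_le a ({b} : Finset V)
    simp only [Finset.card_singleton] at this
    omega
  · have h2 : ({a, b, b} : Finset V) = insert a {b} := by ext z; simp; try tauto
    rw [h2] at h
    have := Finset.card_insert_le a ({b} : Finset V)
    simp only [Finset.card_singleton] at this
    omega

private lemma key_lemma {V : Type*} [DecidableEq V] (E : Finset (Finset V))
    (h3 : ∀ e ∈ E, e.card = 3) (x y u v a₀ : V)
    (huvx : ({u, v, x} : Finset V) ∈ E) (huvy : ({u, v, y} : Finset V) ∈ E)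
    (hy : ∀ f, InCStar E x a₀ f → y ∉ f)
    (hr : LinkReach E x a₀ u) (hw : ∃ w, LinkAdj E x u w) : False := by
  obtain ⟨w, hadj⟩ := hw
  have hxuw : ({x, u, w} : Finset V) ∈ E := hadj.2
  obtain ⟨hxu, hxw, huw⟩ := three_distinct (h3 _ hxuw)
  obtain ⟨huv, hux, hvx⟩ := three_distinct (h3 _ huvx)
  obtain ⟨_, huy, hvy⟩ := three_distinct (h3 _ huvy)
  -- step 1 : {x,u,w} tightly connected to {u,v,x}
  have step1 : TightConnIn E ({x, u, w} : Finset V) ({u, v, x} : Finset V) := by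
    by_cases hwv : w = v
    · subst hwv
      have : ({x, u, w} : Finset V) = ({u, w, x} : Finset V) := by
        ext z; simp; try tauto
      rw [this]
      exact Relation.ReflTransGen.refl
    · refine Relation.ReflTransGen.single ⟨hxuw, huvx, ?_⟩
      have : ({x, u, w} : Finset V) ∩ ({u, v, x} : Finset V) = ({x, u} : Finset V) := by
        ext z
        simp only [Finset.mem_inter, Finset.mem_insert, Finset.mem_singleton]
        constructor
        · rintro ⟨h1 | h1 | h1, h2 | h2 | h2⟩ <;> subst h1 <;> tauto
        · rintro (rfl | rfl) <;> tauto
      rw [this, Finset.card_insert_of_notMem (by simp [hxu]), Finset.card_singleton]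
  -- step 2 : {u,v,x} tightly connected to {u,v,y}
  have step2 : TightConnIn E ({u, v, x} : Finset V) ({u, v, y} : Finset V) := by
    by_cases hxy : x = y
    · subst hxy; exact Relation.ReflTransGen.refl
    · refine Relation.ReflTransGen.single ⟨huvx, huvy, ?_⟩
      have : ({u, v, x} : Finset V) ∩ ({u, v, y} : Finset V) = ({u, v} : Finset V) := by
        ext z
        simp only [Finset.mem_inter, Finset.mem_insert, Finset.mem_singleton]
        constructor
        · rintro ⟨h1 | h1 | h1, h2 | h2 | h2⟩ <;> subst h1 <;> tauto
        · rintro (rfl | rfl) <;> tauto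
      rw [this, Finset.card_insert_of_notMem (by simp [huv]), Finset.card_singleton]
  exact hy ({u, v, y} : Finset V) ⟨huvy, u, w, hadj, hr, step1.trans step2⟩ (by simp)

theorem stmt_17 {V : Type*} [DecidableEq V] (E : Finset (Finset V))
    (h3 : ∀ e ∈ E, e.card = 3) (x y u v a₀ b₀ : V)
    -- `a₀` (resp. `b₀`) is a vertex of the largest link component `C_x` (resp. `C_y`)
    (ha₀ : ∃ w, LinkAdj E x a₀ w) (hb₀ : ∃ w, LinkAdj E y b₀ w)
    (huvx : ({u, v, x} : Finset V) ∈ E) (huvy : ({u, v, y} : Finset V) ∈ E)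
    -- the tight components `C*ₓ` and `C*_y` are distinct
    (hdistinct : ∃ f, (InCStar E x a₀ f ∧ ¬ InCStar E y b₀ f) ∨
      (InCStar E y b₀ f ∧ ¬ InCStar E x a₀ f))
    -- `y ∉ V(C*ₓ)` and, symmetrically, `x ∉ V(C*_y)`
    (hy : ∀ f, InCStar E x a₀ f → y ∉ f)
    (hx : ∀ f, InCStar E y b₀ f → x ∉ f) :
    ¬ (LinkReach E x a₀ u ∧ ∃ w, LinkAdj E x u w) ∧
    ¬ (LinkReach E y b₀ u ∧ ∃ w, LinkAdj E y u w) := by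
  constructor
  · rintro ⟨hr, hw⟩
    exact key_lemma E h3 x y u v a₀ huvx huvy hy hr hw
  · rintro ⟨hr, hw⟩
    exact key_lemma E h3 y x u v b₀ huvy huvx hx hr hw
end

section
/- Let α, β, γ ∈ [1/2, 1] with α + β + γ ≥ 2. Then (2α − α²) + (2β − β²) + (2γ − γ²) ≥ 5/2, with equality attained at (α,β,γ) = (1/2, 1/2, 1). -/
theorem stmt_18 :
    (∀ α β γ : ℝ, α ∈ Set.Icc (1/2 : ℝ) 1 → β ∈ Set.Icc (1/2 : ℝ) 1 →
      γ ∈ Set.Icc (1/2 : ℝ) 1 → 2 ≤ α + β + γ →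
      (5/2 : ℝ) ≤ (2*α - α^2) + (2*β - β^2) + (2*γ - γ^2)) ∧
    (2*(1/2 : ℝ) - (1/2 : ℝ)^2) + (2*(1/2 : ℝ) - (1/2 : ℝ)^2) + (2*1 - (1 : ℝ)^2)
      = 5/2 := by
  constructor
  · rintro α β γ ⟨ha1, ha2⟩ ⟨hb1, hb2⟩ ⟨hc1, hc2⟩ hs
    nlinarith [mul_nonneg (sub_nonneg.2 ha2) (sub_nonneg.2 ha1),
      mul_nonneg (sub_nonneg.2 hb2) (sub_nonneg.2 hb1),
      mul_nonneg (sub_nonneg.2 hc2) (sub_nonneg.2 hc1),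
      mul_nonneg (mul_nonneg (sub_nonneg.2 ha2) (sub_nonneg.2 hb2)) (sub_nonneg.2 hc2)]
  · norm_num
end

section
/- In the 3-graph on X ∪ Y ∪ Z with all edges of types XXX, XYY, YYY, ZXX (X, Y, Z disjoint and nonempty), every edge of type XXX or ZXX is tightly connected to every other edge of type XXX or ZXX, provided |X| ≥ 3. -/
open Finset

/-!
The triples inside `X` form a tightly connected family: two triples `A ≠ B` are joined by
exchanging a vertex of `A \ B` for one of `B \ A`, which produces a tightly adjacent triple
closer to `B`. A `ZXX` edge `e` meets `X` in a pair, and since `|X| ≥ 3` this pair extends to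
a triple in `X`, tightly adjacent to `e`. Hence every `XXX` or `ZXX` edge is tightly connected
to the triples of `X`, and so to every other such edge.
-/

namespace TightConnIn

variable {V : Type*} [DecidableEq V] {E : Finset (Finset V)} {S e f : Finset V}

theorem symm (h : TightConnIn E e f) : TightConnIn E f e :=
  (@Relation.ReflTransGen.stdSymm _ _
    ⟨fun _ _ ⟨ha, hb, hab⟩ => ⟨hb, ha, by rwa [inter_comm]⟩⟩).symm _ _ h

theorem of_adj (he : e ∈ E) (hf : f ∈ E) (hef : (e ∩ f).card = 2) : TightConnIn E e f :=
  Relation.ReflTransGen.single ⟨he, hf, hef⟩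

theorem of_mem_powersetCard (hS : S.powersetCard 3 ⊆ E) {A B : Finset V}
    (hA : A ∈ S.powersetCard 3) (hB : B ∈ S.powersetCard 3) : TightConnIn E A B := by
  induction hn : (B \ A).card generalizing A with
  | zero =>
    rw [card_eq_zero, sdiff_eq_empty_iff_subset] at hn
    rw [eq_of_subset_of_card_le hn (by rw [(mem_powersetCard.1 hA).2, (mem_powersetCard.1 hB).2])]
    exact Relation.ReflTransGen.refl
  | succ n ih =>
    rw [mem_powersetCard] at hA hB
    obtain ⟨b, hbB, hbA⟩ := not_subset.1 fun hBA : B ⊆ A => by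
      simp [sdiff_eq_empty_iff_subset.2 hBA] at hn
    obtain ⟨a, haA, haB⟩ := not_subset.1 fun hAB : A ⊆ B =>
      hbA (eq_of_subset_of_card_le hAB (by rw [hA.2, hB.2]) ▸ hbB)
    have hbA' : b ∉ A.erase a := fun h => hbA (mem_of_mem_erase h)
    have hA' : insert b (A.erase a) ∈ S.powersetCard 3 := by
      refine mem_powersetCard.2 ⟨insert_subset (hB.1 hbB) ((erase_subset a A).trans hA.1), ?_⟩
      rw [card_insert_of_notMem hbA', card_erase_of_mem haA, hA.2]
    have hadj : (A ∩ insert b (A.erase a)).card = 2 := by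
      rw [inter_insert_of_notMem hbA, inter_eq_right.2 (erase_subset a A),
        card_erase_of_mem haA, hA.2]
    have hcloser : (B \ insert b (A.erase a)).card = n := by
      have : B \ insert b (A.erase a) = (B \ A).erase b := by
        ext x
        simp only [mem_sdiff, mem_insert, mem_erase]
        grind
      rw [this, card_erase_of_mem (mem_sdiff.2 ⟨hbB, hbA⟩), hn, Nat.add_sub_cancel]
    exact (of_adj (hS (mem_powersetCard.2 hA)) (hS hA') hadj).trans (ih hA' hcloser)

theorem exists_mem_powersetCard (hS : S.powersetCard 3 ⊆ E) (hS3 : 3 ≤ S.card) (he : e ∈ E)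
    (heS : (e ∩ S).card = 2) : ∃ A ∈ S.powersetCard 3, TightConnIn E e A := by
  obtain ⟨x, hxS, hxe⟩ : ∃ x ∈ S, x ∉ e ∩ S :=
    exists_of_ssubset (ssubset_of_subset_of_ne inter_subset_right fun h => by
      rw [h] at heS; omega)
  have hx : x ∉ e := fun h => hxe (mem_inter.2 ⟨h, hxS⟩)
  have hA : insert x (e ∩ S) ∈ S.powersetCard 3 := by
    refine mem_powersetCard.2 ⟨insert_subset hxS inter_subset_right, ?_⟩
    rw [card_insert_of_notMem hxe, heS]
  refine ⟨_, hA, of_adj he (hS hA) ?_⟩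
  rw [inter_insert_of_notMem hx, ← inter_assoc, inter_self, heS]

end TightConnIn

theorem stmt_19_general {V : Type*} [Fintype V] [DecidableEq V] (X Y Z : Finset V)
    (hX3 : 3 ≤ X.card)
    (E : Finset (Finset V))
    (hE : E = (Finset.univ.powersetCard 3).filter (fun e =>
      e ⊆ X ∨ ((e ∩ X).card = 1 ∧ (e ∩ Y).card = 2) ∨ e ⊆ Y ∨
        ((e ∩ Z).card = 1 ∧ (e ∩ X).card = 2))) :
    ∀ e ∈ E, ∀ f ∈ E,
      (e ⊆ X ∨ ((e ∩ Z).card = 1 ∧ (e ∩ X).card = 2)) →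
      (f ⊆ X ∨ ((f ∩ Z).card = 1 ∧ (f ∩ X).card = 2)) →
      TightConnIn E e f := by
  have hXE : X.powersetCard 3 ⊆ E := fun A hA => by
    rw [mem_powersetCard] at hA
    rw [hE, mem_filter, mem_powersetCard]
    exact ⟨⟨subset_univ A, hA.2⟩, Or.inl hA.1⟩
  have anchor : ∀ e ∈ E, (e ⊆ X ∨ ((e ∩ Z).card = 1 ∧ (e ∩ X).card = 2)) →
      ∃ A ∈ X.powersetCard 3, TightConnIn E e A := by
    rintro e he (heX | ⟨-, heX⟩)
    · have he3 : e.card = 3 := by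
        rw [hE, mem_filter, mem_powersetCard] at he
        exact he.1.2
      exact ⟨e, mem_powersetCard.2 ⟨heX, he3⟩, Relation.ReflTransGen.refl⟩
    · exact TightConnIn.exists_mem_powersetCard hXE hX3 he heX
  intro e he f hf he' hf'
  obtain ⟨A, hA, heA⟩ := anchor e he he'
  obtain ⟨B, hB, hfB⟩ := anchor f hf hf'
  exact heA.trans ((TightConnIn.of_mem_powersetCard hXE hA hB).trans hfB.symm)

theorem stmt_19 {V : Type*} [Fintype V] [DecidableEq V] (X Y Z : Finset V)
    (hXY : Disjoint X Y) (hXZ : Disjoint X Z) (hYZ : Disjoint Y Z)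
    (hUnion : X ∪ Y ∪ Z = Finset.univ)
    (hX : X.Nonempty) (hY : Y.Nonempty) (hZ : Z.Nonempty)
    (hX3 : 3 ≤ X.card)
    (E : Finset (Finset V))
    (hE : E = (Finset.univ.powersetCard 3).filter (fun e =>
      e ⊆ X ∨ ((e ∩ X).card = 1 ∧ (e ∩ Y).card = 2) ∨ e ⊆ Y ∨
        ((e ∩ Z).card = 1 ∧ (e ∩ X).card = 2))) :
    ∀ e ∈ E, ∀ f ∈ E,
      (e ⊆ X ∨ ((e ∩ Z).card = 1 ∧ (e ∩ X).card = 2)) →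
      (f ⊆ X ∨ ((f ∩ Z).card = 1 ∧ (f ∩ X).card = 2)) →
      TightConnIn E e f :=
  stmt_19_general X Y Z hX3 E hE
end
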